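/- arXiv:1407.5030 — 2 statements merged into one kernel-verified Lean document; each statement's English description precedes it below -/
import Mathlib

section
/- In every MCR game, Max has a memoryless optimal strategy: there exists a memoryless strategy σ* for Max such that Val(v, σ*) = Val(v) for every vertex v. -/
open Filter

/-- A two-player turn-based weighted game graph. `owner v = true` means that
vertex `v` belongs to player Max, `owner v = false` that it belongs to player Min.
Every vertex has at least one successor. -/
structure Game (V : Type) where
  owner : V → Bool
  E : V → V → Prop
  nonempty : ∀ v, ∃ v', E v v'
  w : V → V → ℤ

namespace Game

variable {V : Type}

/-- The (reversed) history of the first `k` vertices of `π` (most recent first). -/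
def hist (π : ℕ → V) (k : ℕ) : List V := (List.ofFn fun i : Fin k => π i).reverse

/-- A strategy: given the (reversed) list of previously visited vertices and the current
vertex, it picks a successor of the current vertex. -/
structure Strategy (g : Game V) where
  next : List V → V → V
  valid : ∀ h v, g.E v (next h v)

/-- A memoryless strategy only depends on the current vertex. -/
def Strategy.Memoryless {g : Game V} (s : g.Strategy) : Prop :=
  ∀ h h' v, s.next h v = s.next h' v

/-- A finite-memory strategy is one encoded by a deterministic Moore machine
`⟨M, m0, up, dec⟩`: the choice after a finite play is `dec` applied to the memory state
reached by reading the play (the initial vertex is not read) and to the last vertex. -/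
def Strategy.FiniteMemory {g : Game V} (s : g.Strategy) : Prop :=
  ∃ (M : Type) (_ : Fintype M) (m0 : M) (up : M → V → M) (dec : M → V → V),
    ∀ h v, s.next h v = dec (List.foldl up m0 (((h.reverse ++ [v]).drop 1))) v

variable (g : Game V)

/-- Next vertex chosen by the owner of the current vertex. -/
def step (σ τ : g.Strategy) (h : List V) (v : V) : V :=
  if g.owner v then σ.next h v else τ.next h v

/-- Current vertex and reversed history after `k` steps of the play `Play(v, σ, τ)`. -/
def playAux (σ τ : g.Strategy) (v : V) : ℕ → V × List V
  | 0 => (v, [])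
  | k+1 =>
      let p := playAux σ τ v k
      (g.step σ τ p.2 p.1, p.1 :: p.2)

/-- `Play(v, σ, τ)`: the unique play starting in `v` and conforming to the
strategy `σ` of Max and the strategy `τ` of Min. -/
def play (σ τ : g.Strategy) (v : V) (k : ℕ) : V := (g.playAux σ τ v k).1

/-- An infinite sequence of vertices is a play when consecutive vertices are linked
by edges. -/
def IsPlay (π : ℕ → V) : Prop := ∀ k, g.E (π k) (π (k+1))

/-- A play conforms to a strategy `s` of the player `p` if, whenever the current vertex
belongs to `p`, the next vertex is the one prescribed by `s`. -/
def Conforms (p : Bool) (s : g.Strategy) (π : ℕ → V) : Prop :=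
  ∀ k, g.owner (π k) = p → π (k+1) = s.next (hist π k) (π k)

/-- Total-payoff of the prefix of length `k`: the sum of the first `k` edge weights. -/
def TPfin (π : ℕ → V) (k : ℕ) : ℤ := ∑ i ∈ Finset.range k, g.w (π i) (π (i+1))

/-- Total payoff of an infinite play: `liminf` of the payoffs of its prefixes. -/
noncomputable def TP (π : ℕ → V) : EReal :=
  liminf (fun k => (((g.TPfin π k : ℤ) : ℝ) : EReal)) atTop

/-- Mean payoff of an infinite play. -/
noncomputable def MP (π : ℕ → V) : EReal :=
  liminf (fun k => ((((g.TPfin π k : ℤ) : ℝ) / (k : ℝ)) : EReal)) atTop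

open Classical in
/-- Min-cost reachability payoff with target `t`: total payoff up to the first visit
of `t`, and `+∞` if `t` is never visited. -/
noncomputable def MCR (t : V) (π : ℕ → V) : EReal :=
  if h : ∃ k, π k = t then (((g.TPfin π (Nat.find h) : ℤ) : ℝ) : EReal) else ⊤

open Classical in
/-- `MCR` payoff restricted to reaching the target among the first `i+1` vertices. -/
noncomputable def MCRbd (t : V) (i : ℕ) (π : ℕ → V) : EReal :=
  if ∃ k ≤ i, π k = t then g.MCR t π else ⊤

/-- Value of a strategy `σ` of Max from `v` : `inf_τ P(Play(v, σ, τ))`. -/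
noncomputable def valMax (P : (ℕ → V) → EReal) (v : V) (σ : g.Strategy) : EReal :=
  ⨅ τ : g.Strategy, P (g.play σ τ v)

/-- Value of a strategy `τ` of Min from `v` : `sup_σ P(Play(v, σ, τ))`. -/
noncomputable def valMin (P : (ℕ → V) → EReal) (v : V) (τ : g.Strategy) : EReal :=
  ⨆ σ : g.Strategy, P (g.play σ τ v)

/-- Lower value `Val⁻(v) = sup_σ inf_τ P(Play(v, σ, τ))`. -/
noncomputable def lowerVal (P : (ℕ → V) → EReal) (v : V) : EReal :=
  ⨆ σ : g.Strategy, g.valMax P v σ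

/-- Upper value `Val⁺(v) = inf_τ sup_σ P(Play(v, σ, τ))`. -/
noncomputable def upperVal (P : (ℕ → V) → EReal) (v : V) : EReal :=
  ⨅ τ : g.Strategy, g.valMin P v τ

end Game

/-- A min-cost reachability game: a game together with a target vertex `t` whose only
outgoing edge is a self-loop of weight `0`. -/
structure MCRGame (V : Type) extends Game V where
  t : V
  loop : E t t
  loopOnly : ∀ v, E t v → v = t
  loopZero : w t t = 0

/-- The value of a (determined) MCR game. -/
noncomputable def MCRGame.Val {V : Type} (G : MCRGame V) : V → EReal :=
  fun v => G.toGame.lowerVal (G.toGame.MCR G.t) v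

/-- The `i`-step value `val_i(v) = inf_τ sup_σ MCR_i(Play(v, σ, τ))`. -/
noncomputable def MCRGame.ival {V : Type} (G : MCRGame V) (i : ℕ) : V → EReal :=
  fun v => G.toGame.upperVal (G.toGame.MCRbd G.t i) v

/-!
The value satisfies `Val t = 0` and the local inequality `Val v ≤ w(v, v') + Val v'` along every
edge of Min (Min may move to `v'` first and then answer optimally from `v'`) and along at least
one edge of Max at every Max vertex (an edge maximising `w(v, ·) + Val(·)`: whatever Max plays
first, Min answers as before). Let `σ*` be the memoryless strategy that always follows such an
edge of Max. Then along every play consistent with `σ*` the value is a potential,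
`Val π₀ ≤ TP(π[k]) + Val πₖ`, and at the first visit of `t` this reads `Val π₀ ≤ MCR(π)`.
-/

namespace Game

variable {V : Type} {g : Game V}

def Strategy.ofFun (f : V → V) (hf : ∀ v, g.E v (f v)) : g.Strategy :=
  ⟨fun _ v => f v, fun _ v => hf v⟩

lemma Strategy.memoryless_ofFun (f : V → V) (hf : ∀ v, g.E v (f v)) :
    (Strategy.ofFun f hf).Memoryless :=
  fun _ _ _ => rfl

/-- The strategy `σ` continued after a first move out of `v`. -/
def Strategy.shift (σ : g.Strategy) (v : V) : g.Strategy :=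
  ⟨fun h u => σ.next (h ++ [v]) u, fun _ _ => σ.valid _ _⟩

open Classical in
/-- Move from `v` to `v'` first, then play `τ` on the rest of the history. -/
noncomputable def Strategy.prepend (τ : g.Strategy) {v v' : V} (hE : g.E v v') :
    g.Strategy where
  next h u := if h = [] ∧ u = v then v' else τ.next h.dropLast u
  valid h u := by
    split_ifs with hu
    · exact hu.2 ▸ hE
    · exact τ.valid _ _

instance : Nonempty g.Strategy :=
  ⟨.ofFun (fun v => (g.nonempty v).choose) fun v => (g.nonempty v).choose_spec⟩

lemma step_mem_E (σ τ : g.Strategy) (h : List V) (v : V) : g.E v (g.step σ τ h v) := by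
  unfold step
  split
  · exact σ.valid _ _
  · exact τ.valid _ _

lemma play_succ (σ τ : g.Strategy) (v : V) (k : ℕ) :
    g.play σ τ v (k + 1) = g.step σ τ (g.playAux σ τ v k).2 (g.play σ τ v k) :=
  rfl

lemma isPlay_play (σ τ : g.Strategy) (v : V) : g.IsPlay (g.play σ τ v) :=
  fun k => play_succ σ τ v k ▸ step_mem_E _ _ _ _

lemma step_prepend_append (σ τ : g.Strategy) {v v' : V} (hE : g.E v v') (h : List V) (u : V) :
    g.step σ (τ.prepend hE) (h ++ [v]) u = g.step (σ.shift v) τ h u := by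
  unfold step
  cases g.owner u <;> simp [Strategy.shift, Strategy.prepend]

lemma playAux_prepend_succ (σ τ : g.Strategy) {v v' : V} (hE : g.E v v')
    (hσ : g.owner v = true → σ.next [] v = v') (k : ℕ) :
    g.playAux σ (τ.prepend hE) v (k + 1) =
      ((g.playAux (σ.shift v) τ v' k).1, (g.playAux (σ.shift v) τ v' k).2 ++ [v]) := by
  induction k with
  | zero =>
    show (g.step σ (τ.prepend hE) [] v, [v]) = (v', [v])
    unfold step
    cases hv : g.owner v
    · simp [Strategy.prepend]
    · simpa using hσ hv
  | succ k ih =>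
    rw [playAux, ih]
    simp only [step_prepend_append]
    rfl

lemma play_prepend_succ (σ τ : g.Strategy) {v v' : V} (hE : g.E v v')
    (hσ : g.owner v = true → σ.next [] v = v') (k : ℕ) :
    g.play σ (τ.prepend hE) v (k + 1) = g.play (σ.shift v) τ v' k := by
  unfold play
  rw [playAux_prepend_succ σ τ hE hσ]

lemma TPfin_succ' (π : ℕ → V) (k : ℕ) :
    g.TPfin π (k + 1) = g.w (π 0) (π 1) + g.TPfin (fun i => π (i + 1)) k := by
  rw [TPfin, Finset.sum_range_succ', add_comm]
  rfl

lemma TPfin_succ (π : ℕ → V) (k : ℕ) :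
    g.TPfin π (k + 1) = g.TPfin π k + g.w (π k) (π (k + 1)) :=
  Finset.sum_range_succ _ _

lemma MCR_eq_weight_add_MCR_tail {t : V} {π : ℕ → V} (h0 : π 0 ≠ t) :
    g.MCR t π = ((g.w (π 0) (π 1) : ℝ) : EReal) + g.MCR t (fun i => π (i + 1)) := by
  classical
  unfold MCR
  by_cases htail : ∃ k, π (k + 1) = t
  · have hreach : ∃ k, π k = t := ⟨_, htail.choose_spec⟩
    rw [dif_pos hreach, dif_pos htail, Nat.find_comp_succ hreach htail h0, TPfin_succ']
    push_cast
    rfl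
  · have hnever : ¬∃ k, π k = t := by
      rintro ⟨_ | k, hk⟩
      exacts [h0 hk, htail ⟨k, hk⟩]
    rw [dif_neg hnever, dif_neg htail, EReal.coe_add_top]

lemma le_MCR_of_le_weight_add {t : V} (f : V → EReal) (ht : f t = 0) {π : ℕ → V}
    (hπ : ∀ k, f (π k) ≤ ((g.w (π k) (π (k + 1)) : ℝ) : EReal) + f (π (k + 1))) :
    f (π 0) ≤ g.MCR t π := by
  classical
  have potential : ∀ k, f (π 0) ≤ ((g.TPfin π k : ℝ) : EReal) + f (π k) := by
    intro k
    induction k with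
    | zero => simp [TPfin]
    | succ k ih =>
      calc f (π 0) ≤ ((g.TPfin π k : ℝ) : EReal) + f (π k) := ih
        _ ≤ ((g.TPfin π k : ℝ) : EReal) +
              (((g.w (π k) (π (k + 1)) : ℝ) : EReal) + f (π (k + 1))) := by gcongr; exact hπ k
        _ = ((g.TPfin π (k + 1) : ℝ) : EReal) + f (π (k + 1)) := by
          rw [← add_assoc, TPfin_succ]
          push_cast
          rfl
  unfold MCR
  split_ifs with hreach
  · simpa [Nat.find_spec hreach, ht] using potential (Nat.find hreach)
  · exact le_top

end Game

lemma EReal.le_coe_add_iInf {ι : Sort*} {x : EReal} {c : ℝ} {f : ι → EReal}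
    (h : ∀ i, x ≤ c + f i) : x ≤ c + ⨅ i, f i := by
  have hsub : x - c ≤ ⨅ i, f i := le_iInf fun i => EReal.sub_le_of_le_add' (h i)
  rw [EReal.sub_le_iff_le_add (.inl (EReal.coe_ne_bot c)) (.inl (EReal.coe_ne_top c))] at hsub
  rwa [add_comm]

namespace MCRGame

open Game

variable {V : Type} (G : MCRGame V)

lemma play_target (σ τ : G.Strategy) (k : ℕ) : G.play σ τ G.t k = G.t := by
  induction k with
  | zero => rfl
  | succ k ih =>
    have hE := G.isPlay_play σ τ G.t k
    rw [ih] at hE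
    exact G.loopOnly _ hE

lemma valMax_target (σ : G.Strategy) : G.valMax (G.MCR G.t) G.t σ = 0 := by
  simp [valMax, MCR, play_target, TPfin, G.loopZero]

lemma Val_target : G.Val G.t = 0 := by
  simp [Val, lowerVal, valMax_target]

lemma valMax_le_Val (σ : G.Strategy) (v : V) : G.valMax (G.MCR G.t) v σ ≤ G.Val v :=
  le_iSup (G.valMax (G.MCR G.t) v) σ

/-- Min moves to `v'` (unless `σ` already does) and then answers the shifted strategy. -/
lemma valMax_le_weight_add_Val (σ : G.Strategy) {v v' : V} (hE : G.E v v')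
    (hσ : G.owner v = true → σ.next [] v = v') :
    G.valMax (G.MCR G.t) v σ ≤ ((G.w v v' : ℝ) : EReal) + G.Val v' := by
  by_cases hv : v = G.t
  · subst hv
    obtain rfl := G.loopOnly v' hE
    simp [valMax_target, Val_target, G.loopZero]
  have shifted : G.valMax (G.MCR G.t) v σ ≤
      ((G.w v v' : ℝ) : EReal) + G.valMax (G.MCR G.t) v' (σ.shift v) := by
    refine EReal.le_coe_add_iInf fun τ => (iInf_le _ (τ.prepend hE)).trans_eq ?_
    rw [MCR_eq_weight_add_MCR_tail hv]
    simp only [play_prepend_succ σ τ hE hσ]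
    rfl
  exact shifted.trans (by gcongr; exact G.valMax_le_Val _ v')

lemma Val_le_weight_add_Val_of_owner_false {v v' : V} (hv : G.owner v = false)
    (hE : G.E v v') : G.Val v ≤ ((G.w v v' : ℝ) : EReal) + G.Val v' :=
  iSup_le fun σ => G.valMax_le_weight_add_Val σ hE (by simp [hv])

lemma exists_Val_le_weight_add_Val [Fintype V] (v : V) :
    ∃ u, G.E v u ∧ G.Val v ≤ ((G.w v u : ℝ) : EReal) + G.Val u := by
  classical
  obtain ⟨u, hu, hmax⟩ := Finset.exists_max_image {u | G.E v u}
    (fun u => ((G.w v u : ℝ) : EReal) + G.Val u)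
    ((G.nonempty v).imp fun _ hu => by simpa using hu)
  refine ⟨u, by simpa using hu, iSup_le fun σ => ?_⟩
  exact (G.valMax_le_weight_add_Val σ (σ.valid [] v) fun _ => rfl).trans
    (hmax _ (by simpa using σ.valid [] v))

lemma Val_le_valMax_of_moves (σ : G.Strategy)
    (hσ : ∀ h v, G.owner v = true →
      G.Val v ≤ ((G.w v (σ.next h v) : ℝ) : EReal) + G.Val (σ.next h v)) (v : V) :
    G.Val v ≤ G.valMax (G.MCR G.t) v σ := by
  refine le_iInf fun τ => le_MCR_of_le_weight_add (π := G.play σ τ v) G.Val G.Val_target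
    fun k => ?_
  cases hk : G.owner (G.play σ τ v k)
  · exact G.Val_le_weight_add_Val_of_owner_false hk (G.isPlay_play σ τ v k)
  · rw [play_succ, step, if_pos hk]
    exact hσ _ _ hk

end MCRGame

/-- in every MCR game, Max has a memoryless optimal strategy. -/
theorem statement_12 {V : Type} [Fintype V] (G : MCRGame V) :
    ∃ σ : G.toGame.Strategy, σ.Memoryless ∧
      ∀ v : V, G.toGame.valMax (G.toGame.MCR G.t) v σ = G.Val v := by
  choose f hfE hfVal using G.exists_Val_le_weight_add_Val
  refine ⟨.ofFun f hfE, Game.Strategy.memoryless_ofFun f hfE, fun v => le_antisymm ?_ ?_⟩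
  · exact G.valMax_le_Val _ v
  · exact G.Val_le_valMax_of_moves (.ofFun f hfE) (fun _ u _ => hfVal u) v
end

section
/- Let G be a total-payoff game, τ a strategy for Min, and π = v₁…v_i a finite play conforming to τ. Then TP(v₁…v_i) + Val(v_i) ≤ Val(v₁, τ). -/
open Filter

/-!
Fix a strategy `σ` of Max from `vᵢ`. Let Max first replay the finite play `π` and then follow `σ`,
forgetting the history of `π`. Against `τ` this yields `π` followed by `Play(vᵢ, σ, τ')`, where `τ'`
is `τ` with the history of `π` prepended. Since the total payoff of a play is at least the payoff
of a prefix plus the total payoff of the remaining suffix, `TP(π) + Val(vᵢ, σ) ≤ Val(v₁, τ)`;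
taking the supremum over `σ` gives the claim.
-/

lemma EReal.coe_add_iSup_le {ι : Sort*} {c : ℝ} {f : ι → EReal} {a : EReal}
    (h : ∀ i, (c : EReal) + f i ≤ a) : (c : EReal) + ⨆ i, f i ≤ a := by
  rw [add_comm, ← EReal.le_sub_iff_add_le (.inl (EReal.coe_ne_bot c)) (.inl (EReal.coe_ne_top c))]
  exact iSup_le fun i =>
    (EReal.le_sub_iff_add_le (.inl (EReal.coe_ne_bot c)) (.inl (EReal.coe_ne_top c))).mpr
      ((add_comm _ _).trans_le (h i))

namespace Game

variable {V : Type}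

lemma hist_succ (π : ℕ → V) (k : ℕ) : hist π (k + 1) = π k :: hist π k := by
  simp only [hist, List.ofFn_succ', Fin.val_last, Fin.val_castSucc, List.concat_eq_append,
    List.reverse_append, List.reverse_cons, List.reverse_nil, List.nil_append,
    List.singleton_append]

@[simp]
lemma hist_length (π : ℕ → V) (k : ℕ) : (hist π k).length = k := by simp [hist]

variable {g : Game V}

lemma TPfin_add (π : ℕ → V) (m k : ℕ) :
    g.TPfin π (m + k) = g.TPfin π m + g.TPfin (fun i => π (m + i)) k := by
  simp only [TPfin, Finset.sum_range_add, add_assoc]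

lemma TPfin_congr {π ρ : ℕ → V} {n : ℕ} (h : ∀ i ≤ n, ρ i = π i) :
    g.TPfin ρ n = g.TPfin π n :=
  Finset.sum_congr rfl fun i hi => by
    rw [Finset.mem_range] at hi
    rw [h i hi.le, h (i + 1) hi]

lemma TPfin_add_TP_le_TP (π : ℕ → V) (n : ℕ) :
    ((g.TPfin π n : ℝ) : EReal) + g.TP (fun k => π (n + k)) ≤ g.TP π := by
  have hshift : g.TP π = liminf (fun k => ((g.TPfin π (k + n) : ℝ) : EReal)) atTop :=
    (liminf_nat_add (fun k => ((g.TPfin π k : ℝ) : EReal)) n).symm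
  have hsplit : (fun k => ((g.TPfin π (k + n) : ℝ) : EReal)) =
      (fun _ => ((g.TPfin π n : ℝ) : EReal)) +
        fun k => ((g.TPfin (fun i => π (n + i)) k : ℝ) : EReal) := by
    funext k
    simp only [Pi.add_apply, Nat.add_comm k n, TPfin_add, Int.cast_add, EReal.coe_add]
  rw [hshift, hsplit, TP]
  simpa only [liminf_const] using EReal.le_liminf_add (f := (atTop : Filter ℕ))
    (u := fun _ => ((g.TPfin π n : ℝ) : EReal))
    (v := fun k => ((g.TPfin (fun i => π (n + i)) k : ℝ) : EReal))

namespace Strategy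

def residual (τ : g.Strategy) (H : List V) : g.Strategy where
  next h v := τ.next (h ++ H) v
  valid _ _ := τ.valid _ _

open Classical in
/-- Histories are stored most recent first, so `h.take (h.length - n)` forgets the first `n`
vertices of the play. The edge test only serves to make the result a strategy. -/
noncomputable def followThen (π : ℕ → V) (n : ℕ) (σ : g.Strategy) : g.Strategy where
  next h v :=
    if h.length < n ∧ g.E v (π (h.length + 1)) then π (h.length + 1)
    else σ.next (h.take (h.length - n)) v
  valid h v := by
    split_ifs with hcond
    exacts [hcond.2, σ.valid _ v]

end Strategy

lemma playAux_snd_length (σ τ : g.Strategy) (v : V) :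
    ∀ k, (g.playAux σ τ v k).2.length = k
  | 0 => rfl
  | k + 1 => by simp [playAux, playAux_snd_length σ τ v k]

section FollowThen

variable {σ τ : g.Strategy} {π : ℕ → V} {n : ℕ}

lemma playAux_followThen_of_le (hplay : ∀ i, i < n → g.E (π i) (π (i + 1)))
    (hconf : ∀ k, k < n → g.owner (π k) = false → π (k + 1) = τ.next (hist π k) (π k)) :
    ∀ k ≤ n, g.playAux (σ.followThen π n) τ (π 0) k = (π k, hist π k)
  | 0, _ => rfl
  | k + 1, hk => by
    rw [playAux, playAux_followThen_of_le hplay hconf k (by omega), hist_succ]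
    refine Prod.ext ?_ rfl
    change step g _ τ (hist π k) (π k) = π (k + 1)
    cases howner : g.owner (π k)
    · simp [step, howner, hconf k hk howner]
    · simp [step, howner, Strategy.followThen, Nat.lt_of_succ_le hk, hplay k hk]

lemma playAux_followThen_add (hplay : ∀ i, i < n → g.E (π i) (π (i + 1)))
    (hconf : ∀ k, k < n → g.owner (π k) = false → π (k + 1) = τ.next (hist π k) (π k)) :
    ∀ k, g.playAux (σ.followThen π n) τ (π 0) (n + k) =
      ((g.playAux σ (τ.residual (hist π n)) (π n) k).1,
        (g.playAux σ (τ.residual (hist π n)) (π n) k).2 ++ hist π n)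
  | 0 => playAux_followThen_of_le hplay hconf n le_rfl
  | k + 1 => by
    rw [← Nat.add_assoc, playAux, playAux_followThen_add hplay hconf k, playAux]
    refine Prod.ext ?_ rfl
    set p := g.playAux σ (τ.residual (hist π n)) (π n) k
    have hlen : (p.2 ++ hist π n).length = k + n := by
      rw [List.length_append, playAux_snd_length, hist_length]
    change step g _ τ (p.2 ++ hist π n) p.1 = step g σ _ p.2 p.1
    cases howner : g.owner p.1
    · simp [step, howner, Strategy.residual]
    · simp only [step, howner, if_true, Strategy.followThen, hlen, Nat.add_sub_cancel]
      rw [if_neg (by omega), List.take_left' (playAux_snd_length _ _ _ k)]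

lemma TPfin_add_valMax_le_valMin (σ : g.Strategy)
    (hplay : ∀ i, i < n → g.E (π i) (π (i + 1)))
    (hconf : ∀ k, k < n → g.owner (π k) = false → π (k + 1) = τ.next (hist π k) (π k)) :
    ((g.TPfin π n : ℝ) : EReal) + g.valMax g.TP (π n) σ ≤ g.valMin g.TP (π 0) τ := by
  set ρ := g.play (σ.followThen π n) τ (π 0)
  have hprefix : g.TPfin ρ n = g.TPfin π n := TPfin_congr fun i hi => by
    simp only [ρ, play, playAux_followThen_of_le hplay hconf i hi]
  have hsuffix : (fun k => ρ (n + k)) = g.play σ (τ.residual (hist π n)) (π n) := funext fun k => by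
    simp only [ρ, play, playAux_followThen_add hplay hconf k]
  calc ((g.TPfin π n : ℝ) : EReal) + g.valMax g.TP (π n) σ
      ≤ ((g.TPfin ρ n : ℝ) : EReal) + g.TP (fun k => ρ (n + k)) := by
        rw [hprefix, hsuffix]
        gcongr
        exact iInf_le _ _
    _ ≤ g.TP ρ := TPfin_add_TP_le_TP ρ n
    _ ≤ g.valMin g.TP (π 0) τ := le_iSup (fun σ' => g.TP (g.play σ' τ (π 0))) _

end FollowThen

end Game

theorem statement_18_general {V : Type} (g : Game V) (τ : g.Strategy)
    (π : ℕ → V) (n : ℕ)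
    (hplay : ∀ i, i < n → g.E (π i) (π (i+1)))
    (hconf : ∀ k, k < n → g.owner (π k) = false →
      π (k+1) = τ.next (Game.hist π k) (π k)) :
    (((g.TPfin π n : ℤ) : ℝ) : EReal) + g.lowerVal g.TP (π n) ≤
      g.valMin g.TP (π 0) τ :=
  EReal.coe_add_iSup_le fun σ => Game.TPfin_add_valMax_le_valMin σ hplay hconf

/-- in a total-payoff game, for every strategy `τ` of Min and every
finite play `π = v₁…v_i` conforming to `τ`, `TP(v₁…v_i) + Val(v_i) ≤ Val(v₁, τ)`.
(The finite play is given as the first `n+1` vertices of the sequence `π`.) -/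
theorem statement_18 {V : Type} [Fintype V] (g : Game V) (τ : g.Strategy)
    (π : ℕ → V) (n : ℕ)
    (hplay : ∀ i, i < n → g.E (π i) (π (i+1)))
    (hconf : ∀ k, k < n → g.owner (π k) = false →
      π (k+1) = τ.next (Game.hist π k) (π k)) :
    (((g.TPfin π n : ℤ) : ℝ) : EReal) + g.lowerVal g.TP (π n) ≤
      g.valMin g.TP (π 0) τ :=
  statement_18_general g τ π n hplay hconf
end
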